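/- Let M ∈ ℝ^{n×n} be symmetric positive definite, let σ > 0 be such that σI − M⁻¹ is positive semidefinite, let C ⊆ ℝ^n be a nonempty closed convex set, and let g, λ⁰ ∈ ℝ^n. Define d = (1/σ) M⁻¹ g + λ⁰ − (1/σ) M⁻¹ λ⁰. Then λ̃ = d − (1/σ) Π_C(σ d) is the unique minimizer over ℝ^n of the function λ ↦ δ*_C(λ) + (1/2)(λ − g)ᵀ M⁻¹ (λ − g) + (1/2)(λ − λ⁰)ᵀ (σI − M⁻¹)(λ − λ⁰). -/

import Mathlib

/-!
The Hessians `M⁻¹` and `σ • 1 - M⁻¹` of the two quadratic terms add up to `σ • 1`, and the gradient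
of their sum vanishes at `d`; so the smooth part of the objective is `σ/2 ‖λ - d‖²` up to a
constant. The projection inequality makes `σ d - P = σ λ̃` a normal vector of `C` at `P`, hence
`δ*_C(λ) ≥ ⟨λ, P⟩` with equality at `λ = λ̃`. Adding the two, the objective at `λ` is at least
its value at `λ̃` plus `σ/2 ‖λ - λ̃‖²`, which gives both minimality and uniqueness.
-/

open Matrix

/-- The support function `δ*_B(lam) = sup_{z ∈ B} ⟨lam, z⟩` of a set `B ⊆ ℝ^n`,
with values in `EReal`. -/
noncomputable def suppFn {n : ℕ} (B : Set (Fin n → ℝ)) (lam : Fin n → ℝ) : EReal :=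
  ⨆ z : B, ((lam ⬝ᵥ (z : Fin n → ℝ) : ℝ) : EReal)

/-- The objective `λ ↦ δ*_C(λ) + (1/2)(λ-g)ᵀ M⁻¹ (λ-g) + (1/2)(λ-λ⁰)ᵀ(σI - M⁻¹)(λ-λ⁰)`. -/
noncomputable def objLam {n : ℕ} (M : Matrix (Fin n) (Fin n) ℝ) (σ : ℝ)
    (C : Set (Fin n → ℝ)) (g lam0 lam : Fin n → ℝ) : EReal :=
  suppFn C lam +
    (((1 : ℝ)/2 * ((lam - g) ⬝ᵥ (M⁻¹ *ᵥ (lam - g)))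
      + (1 : ℝ)/2 * ((lam - lam0) ⬝ᵥ ((σ • (1 : Matrix (Fin n) (Fin n) ℝ) - M⁻¹) *ᵥ (lam - lam0))) : ℝ) : EReal)

open Filter Topology

theorem nonpos_of_forall_le_mul {a b : ℝ} (h : ∀ t, 0 < t → t ≤ 1 → a ≤ t * b) : a ≤ 0 := by
  have hlim : Tendsto (fun t => t * b) (𝓝[>] 0) (𝓝 0) := by
    simpa using (tendsto_id.mul_const b).mono_left (nhdsWithin_le_nhds (a := (0 : ℝ)))
  refine ge_of_tendsto hlim ?_
  filter_upwards [Ioc_mem_nhdsGT one_pos] with t ht using h t ht.1 ht.2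

section DotProduct

variable {ι : Type*} [Fintype ι]

theorem dotProduct_self_nonneg (v : ι → ℝ) : 0 ≤ v ⬝ᵥ v :=
  dotProduct_self_star_nonneg v

theorem dotProduct_sub_smul_self (a b : ι → ℝ) (t : ℝ) :
    (a - t • b) ⬝ᵥ (a - t • b) = a ⬝ᵥ a - 2 * t * (a ⬝ᵥ b) + t ^ 2 * (b ⬝ᵥ b) := by
  simp only [dotProduct_sub, sub_dotProduct, dotProduct_smul, smul_dotProduct, smul_eq_mul,
    dotProduct_comm b a]
  ring

theorem Convex.dotProduct_sub_le_zero_of_isMinOn {C : Set (ι → ℝ)} (hC : Convex ℝ C)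
    {x p z : ι → ℝ} (hp : p ∈ C)
    (hmin : IsMinOn (fun y => (x - y) ⬝ᵥ (x - y)) C p) (hz : z ∈ C) :
    (x - p) ⬝ᵥ (z - p) ≤ 0 := by
  refine nonpos_of_forall_le_mul (b := (z - p) ⬝ᵥ (z - p) / 2) fun t ht0 ht1 => ?_
  have hseg : (1 - t) • p + t • z ∈ C := hC hp hz (by linarith) ht0.le (by ring)
  have hle := isMinOn_iff.mp hmin _ hseg
  rw [show x - ((1 - t) • p + t • z) = (x - p) - t • (z - p) by module] at hle
  simp only [dotProduct_sub_smul_self] at hle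
  nlinarith

theorem Matrix.IsSymm.add_dotProduct_mulVec_add {A : Matrix ι ι ℝ} (hA : A.IsSymm)
    (x u : ι → ℝ) :
    (x + u) ⬝ᵥ A *ᵥ (x + u) = x ⬝ᵥ A *ᵥ x + 2 * (u ⬝ᵥ A *ᵥ x) + u ⬝ᵥ A *ᵥ u := by
  have hcomm : x ⬝ᵥ A *ᵥ u = u ⬝ᵥ A *ᵥ x := by
    rw [dotProduct_mulVec u, ← mulVec_transpose, hA.eq, dotProduct_comm]
  rw [mulVec_add, dotProduct_add, add_dotProduct, add_dotProduct, hcomm]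
  ring

variable [DecidableEq ι]

noncomputable def objQuad (A : Matrix ι ι ℝ) (σ : ℝ) (g lam0 lam : ι → ℝ) : ℝ :=
  (1 : ℝ)/2 * ((lam - g) ⬝ᵥ (A *ᵥ (lam - g)))
    + (1 : ℝ)/2 * ((lam - lam0) ⬝ᵥ ((σ • (1 : Matrix ι ι ℝ) - A) *ᵥ (lam - lam0)))

theorem objQuad_eq_add {A : Matrix ι ι ℝ} (hA : A.IsSymm) {σ : ℝ} {g lam0 d : ι → ℝ}
    (hd : σ • d = A *ᵥ g + σ • lam0 - A *ᵥ lam0) (lam mu : ι → ℝ) :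
    objQuad A σ g lam0 lam = objQuad A σ g lam0 mu + (lam - mu) ⬝ᵥ (σ • (mu - d))
      + σ / 2 * ((lam - mu) ⬝ᵥ (lam - mu)) := by
  have hB : (σ • (1 : Matrix ι ι ℝ) - A).IsSymm := (isSymm_one.smul σ).sub hA
  have hgrad : A *ᵥ (mu - g) + (σ • (1 : Matrix ι ι ℝ) - A) *ᵥ (mu - lam0) = σ • (mu - d) := by
    rw [smul_sub, hd, sub_mulVec, smul_mulVec, one_mulVec, mulVec_sub, mulVec_sub]
    module
  have hsum : (lam - mu) ⬝ᵥ (σ • (1 : Matrix ι ι ℝ) - A) *ᵥ (lam - mu)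
      = σ * ((lam - mu) ⬝ᵥ (lam - mu)) - (lam - mu) ⬝ᵥ A *ᵥ (lam - mu) := by
    rw [sub_mulVec, smul_mulVec, one_mulVec, dotProduct_sub, dotProduct_smul, smul_eq_mul]
  rw [← hgrad, dotProduct_add]
  unfold objQuad
  rw [show lam - g = (mu - g) + (lam - mu) by abel,
    show lam - lam0 = (mu - lam0) + (lam - mu) by abel, hA.add_dotProduct_mulVec_add,
    hB.add_dotProduct_mulVec_add, hsum]
  ring

end DotProduct

section SupportFunction

variable {n : ℕ} {B : Set (Fin n → ℝ)}

theorem le_suppFn {p : Fin n → ℝ} (hp : p ∈ B) (lam : Fin n → ℝ) :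
    ((lam ⬝ᵥ p : ℝ) : EReal) ≤ suppFn B lam :=
  le_iSup (fun z : B => ((lam ⬝ᵥ (z : Fin n → ℝ) : ℝ) : EReal)) ⟨p, hp⟩

theorem suppFn_eq_of_forall_le {p lam : Fin n → ℝ} (hp : p ∈ B)
    (h : ∀ z ∈ B, lam ⬝ᵥ z ≤ lam ⬝ᵥ p) : suppFn B lam = lam ⬝ᵥ p :=
  le_antisymm (iSup_le fun z => EReal.coe_le_coe_iff.mpr (h z z.2)) (le_suppFn hp lam)

theorem suppFn_smul_sub_proj {x p : Fin n → ℝ} (hB : Convex ℝ B) (hp : p ∈ B)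
    (hmin : IsMinOn (fun y => (x - y) ⬝ᵥ (x - y)) B p) {σ : ℝ} (hσ : 0 < σ) :
    suppFn B ((1 / σ) • (x - p)) = (1 / σ) • (x - p) ⬝ᵥ p := by
  refine suppFn_eq_of_forall_le hp fun z hz => ?_
  have hnormal := hB.dotProduct_sub_le_zero_of_isMinOn hp hmin hz
  rw [dotProduct_sub] at hnormal
  simp only [smul_dotProduct, smul_eq_mul]
  gcongr
  linarith

end SupportFunction

theorem lambda_subproblem_closed_form_general {n : ℕ}
    (M : Matrix (Fin n) (Fin n) ℝ) (hM : M.PosDef)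
    (σ : ℝ) (hσ : 0 < σ)
    (C : Set (Fin n → ℝ)) (hCconv : Convex ℝ C)
    (g lam0 d : Fin n → ℝ)
    (hd : d = (1/σ) • (M⁻¹ *ᵥ g) + lam0 - (1/σ) • (M⁻¹ *ᵥ lam0))
    -- `P = Π_C(σ d)`, the Euclidean projection of `σ d` onto `C`:
    (P : Fin n → ℝ) (hPmem : P ∈ C)
    (hPproj : ∀ z ∈ C, (σ • d - P) ⬝ᵥ (σ • d - P) ≤ (σ • d - z) ⬝ᵥ (σ • d - z))
    (lamt : Fin n → ℝ) (hlamt : lamt = d - (1/σ) • P) :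
    (∀ lam : Fin n → ℝ, objLam M σ C g lam0 lamt ≤ objLam M σ C g lam0 lam) ∧
    (∀ lam : Fin n → ℝ, (∀ lam' : Fin n → ℝ, objLam M σ C g lam0 lam ≤ objLam M σ C g lam0 lam')
      → lam = lamt) := by
  have hsymm : M⁻¹.IsSymm := isHermitian_iff_isSymm.mp hM.isHermitian.inv
  have hσd : σ • d = M⁻¹ *ᵥ g + σ • lam0 - M⁻¹ *ᵥ lam0 := by
    rw [hd, smul_sub, smul_add, smul_smul, smul_smul, mul_one_div_cancel hσ.ne', one_smul,
      one_smul]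
  have hlamt' : lamt = (1 / σ) • (σ • d - P) := by
    rw [hlamt, smul_sub, smul_smul, one_div_mul_cancel hσ.ne', one_smul]
  set r : (Fin n → ℝ) → ℝ := fun lam => lam ⬝ᵥ P + objQuad M⁻¹ σ g lam0 lam
  have hgrowth : ∀ lam, r lam = r lamt + σ / 2 * ((lam - lamt) ⬝ᵥ (lam - lamt)) := by
    intro lam
    have hgrad : σ • (lamt - d) = -P := by
      rw [hlamt, sub_sub_cancel_left, smul_neg, smul_smul, mul_one_div_cancel hσ.ne', one_smul]
    simp only [r, objQuad_eq_add hsymm hσd lam lamt, hgrad, dotProduct_neg, sub_dotProduct]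
    ring
  have hlow : ∀ lam, (r lam : EReal) ≤ objLam M σ C g lam0 lam := fun lam => by
    rw [EReal.coe_add]; exact add_le_add (le_suppFn hPmem lam) le_rfl
  have hat : objLam M σ C g lam0 lamt = r lamt := by
    rw [EReal.coe_add, objLam, hlamt',
      suppFn_smul_sub_proj hCconv hPmem (isMinOn_iff.mpr hPproj) hσ]
    rfl
  have hsq : ∀ lam, 0 ≤ σ / 2 * ((lam - lamt) ⬝ᵥ (lam - lamt)) := fun lam =>
    mul_nonneg (by positivity) (dotProduct_self_nonneg _)
  refine ⟨fun lam => ?_, fun lam hmin => ?_⟩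
  · rw [hat]
    exact le_trans (EReal.coe_le_coe_iff.mpr (by linarith [hgrowth lam, hsq lam])) (hlow lam)
  · have hle : r lam ≤ r lamt := EReal.coe_le_coe_iff.mp ((hlow lam).trans (hat ▸ hmin lamt))
    have hzero : (lam - lamt) ⬝ᵥ (lam - lamt) = 0 := by
      nlinarith [hgrowth lam, dotProduct_self_nonneg (lam - lamt)]
    exact sub_eq_zero.mp (dotProduct_self_eq_zero.mp hzero)

/-- The λ-subproblem has the closed form solution `λ̃ = d - (1/σ) Π_C(σ d)`. -/
theorem lambda_subproblem_closed_form {n : ℕ}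
    (M : Matrix (Fin n) (Fin n) ℝ) (hM : M.PosDef)
    (σ : ℝ) (hσ : 0 < σ)
    (hσM : (σ • (1 : Matrix (Fin n) (Fin n) ℝ) - M⁻¹).PosSemidef)
    (C : Set (Fin n → ℝ)) (hCne : C.Nonempty) (hCcl : IsClosed C) (hCconv : Convex ℝ C)
    (g lam0 d : Fin n → ℝ)
    (hd : d = (1/σ) • (M⁻¹ *ᵥ g) + lam0 - (1/σ) • (M⁻¹ *ᵥ lam0))
    -- `P = Π_C(σ d)`, the Euclidean projection of `σ d` onto `C`:
    (P : Fin n → ℝ) (hPmem : P ∈ C)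
    (hPproj : ∀ z ∈ C, (σ • d - P) ⬝ᵥ (σ • d - P) ≤ (σ • d - z) ⬝ᵥ (σ • d - z))
    (lamt : Fin n → ℝ) (hlamt : lamt = d - (1/σ) • P) :
    (∀ lam : Fin n → ℝ, objLam M σ C g lam0 lamt ≤ objLam M σ C g lam0 lam) ∧
    (∀ lam : Fin n → ℝ, (∀ lam' : Fin n → ℝ, objLam M σ C g lam0 lam ≤ objLam M σ C g lam0 lam')
      → lam = lamt) :=
  lambda_subproblem_closed_form_general M hM σ hσ C hCconv g lam0 d hd P hPmem hPproj lamt hlamt
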